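/- During any mutation sequence on the framed linearly oriented A_n quiver following an allowed shuffle as in the full layered T-system pattern, at every step the mutation vertex k_i has exactly the following incoming arrows within the mutable part: a simple arrow from k_i - 1 (if k_i > 1) and a simple arrow from k_i + 1 (if k_i < n); in particular k_i is a sink of the mutable part. -/

import Mathlib

/-- `IsShuffleSystem elts ks` : the list `ks` is an allowed shuffle of the
lists `(elts 1, ..., elts l), (elts 1, ..., elts (l-1)), ..., (elts 1, elts 2),
(elts 1)` (where `l = elts.length`), i.e. there is an assignment of positions
`pos v m` (position of the `m`-th occurrence of the `v`-th element, 0-based)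
which is bijective onto the positions of `ks`, takes the prescribed values,
lists each row in order, and satisfies the rule that the `v`-th element in row
`m+1` comes after the `(v+1)`-st element in row `m`. -/
def IsShuffleSystem {α : Type*} (elts : List α) (ks : List α) : Prop :=
  ∃ pos : ℕ → ℕ → ℕ,
    (∀ v m, (hv : v < elts.length) → m < elts.length - v →
      ∃ h : pos v m < ks.length, ks.get ⟨pos v m, h⟩ = elts.get ⟨v, hv⟩) ∧
    (∀ v m m', v < elts.length → m < m' → m' < elts.length - v →
      pos v m < pos v m') ∧
    (∀ v m, v + 1 < elts.length → m < elts.length - (v + 1) →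
      pos v m < pos (v + 1) m) ∧
    (∀ v m, v + 1 < elts.length → m < elts.length - (v + 1) →
      pos (v + 1) m < pos v (m + 1)) ∧
    (∀ i : Fin ks.length, ∃ v m, v < elts.length ∧ m < elts.length - v ∧
      pos v m = i.val)

/-- The exchange matrix of the linearly oriented type `A_n` quiver
`1 ← 2 ← ⋯ ← n` (0-based): an arrow `i+1 → i` for each `i`, i.e.
`b_{i+1,i} = 1`. -/
def AnMat (n : ℕ) : Fin n → Fin n → ℤ := fun i j =>
  if i.val = j.val + 1 then 1 else if i.val + 1 = j.val then -1 else 0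

/-- Matrix mutation of a square exchange matrix at the index `k`. -/
def mutSq {n : ℕ} (B : Fin n → Fin n → ℤ) (k : Fin n) : Fin n → Fin n → ℤ :=
  fun i j =>
    if i = k ∨ j = k then -B i j
    else B i j + (|B i k| * B k j + B i k * |B k j|) / 2

/-- Iterated mutation of a square exchange matrix along a list of indices. -/
def mutSeqSq {n : ℕ} (B : Fin n → Fin n → ℤ) (ks : List (Fin n)) :
    Fin n → Fin n → ℤ :=
  ks.foldl mutSq B

/-- The principal-coefficients (framed) extension of an exchange matrix: the
identity matrix stacked below `B`; rows are indexed by `Fin n ⊕ Fin n`, the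
second summand indexing the frozen copies `i'`. -/
def framedMat {n : ℕ} (B : Fin n → Fin n → ℤ) : (Fin n ⊕ Fin n) → Fin n → ℤ :=
  fun i j => Sum.elim (fun a => B a j) (fun a => if a = j then 1 else 0) i

/-- Mutation of an extended (framed) exchange matrix at a mutable index `k`. -/
def mutExt {n : ℕ} (B : (Fin n ⊕ Fin n) → Fin n → ℤ) (k : Fin n) :
    (Fin n ⊕ Fin n) → Fin n → ℤ :=
  fun i j =>
    if i = Sum.inl k ∨ j = k then -B i j
    else B i j + (|B i k| * B (Sum.inl k) j + B i k * |B (Sum.inl k) j|) / 2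

/-- Iterated mutation of an extended exchange matrix along a list of indices. -/
def mutExtSeq {n : ℕ} (B : (Fin n ⊕ Fin n) → Fin n → ℤ) (ks : List (Fin n)) :
    (Fin n ⊕ Fin n) → Fin n → ℤ :=
  ks.foldl mutExt B

theorem tst : True := trivial

/-!
Write `c v` for the number of mutations at `v` performed so far. If `k` is a sink or a source of
the mutable part, mutation at `k` merely reverses the arrows at `k`; so as long as every mutation
happens at a sink or a source, the mutable part is the `A_n` matrix with entry `(a, b)` multiplied
by `(-1) ^ (c a + c b)`, and for such a matrix `k` is a sink or a source iff
`c (k - 1) + c (k + 1)` is odd.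

In an allowed shuffle, the `(m + 1)`-st mutation at `k` comes after exactly `m` mutations at
`k + 1` and `m + 1` mutations at `k - 1`, by the interleaving rules between consecutive rows.
Hence the parity condition always holds, and at the moment of mutation both arrows at `k`
point into `k`.
-/

open Finset

theorem List.count_take_eq_count_getElem? {α : Type*} [DecidableEq α] (l : List α) (v : α)
    (i : ℕ) : (l.take i).count v = Nat.count (fun q => l[q]? = some v) i := by
  induction i with
  | zero => simp
  | succ i ih =>
    rw [List.take_add_one, List.count_append, ih, Nat.count_succ]
    cases l[i]? <;> simp [List.count_singleton', eq_comm]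

theorem List.count_take_eq_card_filter {α : Type*} [DecidableEq α] {l : List α} {v : α}
    {N : ℕ} {p : ℕ → ℕ} (hp : Set.InjOn p (Set.Iio N))
    (hpos : ∀ q, (∃ h : q < l.length, l[q] = v) ↔ ∃ m < N, p m = q) (i : ℕ) :
    (l.take i).count v = #{m ∈ Finset.range N | p m < i} := by
  have himage :
      {q ∈ Finset.range i | l[q]? = some v} = image p {m ∈ Finset.range N | p m < i} := by
    ext q
    simp only [Finset.mem_filter, Finset.mem_range, Finset.mem_image, List.getElem?_eq_some_iff,
      hpos]
    constructor
    · rintro ⟨hq, m, hm, rfl⟩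
      exact ⟨m, ⟨hm, hq⟩, rfl⟩
    · rintro ⟨m, ⟨hm, hq⟩, rfl⟩
      exact ⟨hq, m, hm, rfl⟩
  rw [l.count_take_eq_count_getElem?, Nat.count_eq_card_filter_range, himage,
    card_image_of_injOn (hp.mono fun m hm => by simp_all)]

theorem Finset.card_filter_range_eq {N t : ℕ} {P : ℕ → Prop} [DecidablePred P] (ht : t ≤ N)
    (hP : ∀ m < N, P m ↔ m < t) : #{m ∈ range N | P m} = t := by
  rw [← card_range t]
  congr 1
  ext m
  simp only [mem_filter, mem_range]
  constructor
  · exact fun ⟨hm, h⟩ => (hP m hm).1 h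
  · exact fun h => ⟨by omega, (hP m (by omega)).2 h⟩

theorem interleaved_right_lt_left_iff {p q : ℕ → ℕ} {N m m' : ℕ}
    (hp : StrictMonoOn p (Set.Iio (N + 1))) (hq : StrictMonoOn q (Set.Iio N))
    (hpq : ∀ m < N, p m < q m) (hqp : ∀ m < N, q m < p (m + 1)) (hm : m ≤ N) (hm' : m' < N) :
    q m' < p m ↔ m' < m := by
  constructor
  · intro hlt
    by_contra! hle
    have := (hq.le_iff_le (show m < N by omega) hm').2 hle
    linarith [hpq m (by omega)]
  · intro hlt
    have := (hp.le_iff_le (show m' + 1 < N + 1 by omega) (show m < N + 1 by omega)).2 hlt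
    linarith [hqp m' hm']

theorem interleaved_left_lt_right_iff {p q : ℕ → ℕ} {N m m' : ℕ}
    (hp : StrictMonoOn p (Set.Iio (N + 1))) (hpq : ∀ m < N, p m < q m)
    (hqp : ∀ m < N, q m < p (m + 1)) (hm : m < N) (hm' : m' < N + 1) :
    p m' < q m ↔ m' ≤ m := by
  constructor
  · intro hlt
    by_contra! hle
    have := (hp.le_iff_le (show m + 1 < N + 1 by omega) hm').2 hle
    linarith [hqp m hm]
  · intro hle
    have := (hp.le_iff_le hm' (show m < N + 1 by omega)).2 hle
    linarith [hpq m hm]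

theorem IsShuffleSystem.count_prefix {n : ℕ} {ks l₁ l₂ : List (Fin n)} {k : Fin n}
    (h : IsShuffleSystem (List.finRange n) ks) (hks : ks = l₁ ++ k :: l₂) :
    ∃ m, l₁.count k = m ∧ (∀ v : Fin n, v.val = k.val + 1 → l₁.count v = m) ∧
      (∀ v : Fin n, v.val + 1 = k.val → l₁.count v = m + 1) := by
  obtain ⟨pos, hval, hmono, hrow_le, hrow_lt, hsurj⟩ := h
  simp only [List.length_finRange, List.get_eq_getElem, List.getElem_finRange] at *
  have hmono' (v N : ℕ) (hN : N ≤ n - v) : StrictMonoOn (pos v) (Set.Iio N) :=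
    fun m hm m' hm' hlt => hmono v m m' (by rw [Set.mem_Iio] at hm; omega) hlt (by
      rw [Set.mem_Iio] at hm'; omega)
  have hpositions (v : Fin n) (q : ℕ) :
      (∃ h : q < ks.length, ks[q] = v) ↔ ∃ m < n - v, pos v m = q := by
    constructor
    · rintro ⟨hq, rfl⟩
      obtain ⟨v, m, hv, hm, rfl⟩ := hsurj ⟨q, hq⟩
      obtain ⟨_, hget⟩ := hval v m hv hm
      exact ⟨m, by simpa [hget] using hm, by simp [hget]⟩
    · rintro ⟨m, hm, rfl⟩
      obtain ⟨hlt, hget⟩ := hval v m v.isLt hm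
      exact ⟨hlt, by simpa using hget⟩
  obtain ⟨m, hm, hk⟩ := (hpositions k l₁.length).1 ⟨by simp [hks], by simp [hks]⟩
  have hcount_eq (v : Fin n) (t : ℕ) (ht : t ≤ n - v)
      (hlt_iff : ∀ m' < n - v, pos v m' < pos k m ↔ m' < t) : l₁.count v = t := by
    have hcount := List.count_take_eq_card_filter (hmono' v _ le_rfl).injOn (hpositions v)
      l₁.length
    rw [hks, List.take_left, ← hk] at hcount
    exact hcount.trans (card_filter_range_eq ht hlt_iff)
  refine ⟨m, hcount_eq k m hm.le fun m' hm' => (hmono' k _ le_rfl).lt_iff_lt hm' hm,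
    fun v hv => hcount_eq v m (by omega) fun m' hm' => ?_,
    fun v hv => hcount_eq v (m + 1) (by omega) fun m' hm' => ?_⟩
  · rw [hv]
    exact interleaved_right_lt_left_iff (hmono' k _ (by omega)) (hmono' (k + 1) _ (by omega))
      (fun j hj => hrow_le k j (by omega) hj) (fun j hj => hrow_lt k j (by omega) hj)
      (by omega) (by omega)
  · rw [← hv, Nat.lt_succ_iff]
    exact interleaved_left_lt_right_iff (hmono' v _ (by omega))
      (fun j hj => hrow_le v j (by omega) hj) (fun j hj => hrow_lt v j (by omega) hj)
      (by omega) (by omega)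

theorem IsShuffleSystem.odd_count_add {n : ℕ} {ks l₁ l₂ : List (Fin n)} {k a b : Fin n}
    (h : IsShuffleSystem (List.finRange n) ks) (hks : ks = l₁ ++ k :: l₂)
    (ha : a.val = k.val + 1) (hb : b.val + 1 = k.val) : Odd (l₁.count a + l₁.count b) := by
  obtain ⟨m, -, hm_succ, hm_pred⟩ := h.count_prefix hks
  rw [hm_succ a ha, hm_pred b hb]
  exact ⟨m, by ring⟩

theorem abs_mul_add_mul_abs_eq_zero {α : Type*} [Ring α] [LinearOrder α] [IsOrderedRing α]
    {x y : α} (h : x * y ≤ 0) : |x| * y + x * |y| = 0 := by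
  rcases le_total 0 x with hx | hx <;> rcases le_total 0 y with hy | hy
  · have : x * y = 0 := le_antisymm h (mul_nonneg hx hy)
    simp [abs_of_nonneg, hx, hy, this]
  · simp [abs_of_nonneg hx, abs_of_nonpos hy]
  · simp [abs_of_nonpos hx, abs_of_nonneg hy]
  · have : x * y = 0 := le_antisymm h (mul_nonneg_of_nonpos_of_nonpos hx hy)
    simp [abs_of_nonpos, hx, hy, this]

theorem AnMat_antisymm {n : ℕ} (a b : Fin n) : AnMat n b a = -AnMat n a b := by
  unfold AnMat
  split_ifs <;> omega

theorem AnMat_mul_AnMat_eq_zero_or {n : ℕ} (a k b : Fin n) :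
    AnMat n a k * AnMat n k b = 0 ∨ a = b ∨
      (a.val = k.val + 1 ∧ b.val + 1 = k.val) ∨ (a.val + 1 = k.val ∧ b.val = k.val + 1) := by
  unfold AnMat
  rw [Fin.ext_iff]
  split_ifs <;> omega

def signedAnMat {n : ℕ} (l : List (Fin n)) (a b : Fin n) : ℤ :=
  (-1) ^ (l.count a + l.count b) * AnMat n a b

theorem signedAnMat_antisymm {n : ℕ} (l : List (Fin n)) (a b : Fin n) :
    signedAnMat l b a = -signedAnMat l a b := by
  simp only [signedAnMat, AnMat_antisymm a b, add_comm (l.count b)]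
  ring

theorem signedAnMat_mul_nonpos {n : ℕ} {l : List (Fin n)} {k : Fin n}
    (hk : ∀ a b : Fin n, a.val = k.val + 1 → b.val + 1 = k.val → Odd (l.count a + l.count b))
    (a b : Fin n) : signedAnMat l a k * signedAnMat l k b ≤ 0 := by
  have hprod : signedAnMat l a k * signedAnMat l k b =
      (-1) ^ (l.count a + l.count b + 2 * l.count k) * (AnMat n a k * AnMat n k b) := by
    unfold signedAnMat
    ring
  rcases AnMat_mul_AnMat_eq_zero_or a k b with h0 | rfl | ⟨ha, hb⟩ | ⟨ha, hb⟩
  · simp [hprod, h0]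
  · rw [signedAnMat_antisymm l a k, mul_neg, neg_nonpos]
    exact mul_self_nonneg _
  · rw [hprod, ((hk a b ha hb).add_even (even_two_mul _)).neg_one_pow, AnMat, AnMat]
    split_ifs <;> omega
  · rw [hprod, add_comm (l.count a), ((hk b a hb ha).add_even (even_two_mul _)).neg_one_pow,
      AnMat, AnMat]
    split_ifs <;> omega

theorem mutExt_signedAnMat {n : ℕ} {B : (Fin n ⊕ Fin n) → Fin n → ℤ} {l : List (Fin n)}
    {k : Fin n} (hB : ∀ a b, B (.inl a) b = signedAnMat l a b)
    (hk : ∀ a b : Fin n, a.val = k.val + 1 → b.val + 1 = k.val → Odd (l.count a + l.count b))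
    (a b : Fin n) : mutExt B k (.inl a) b = signedAnMat (l ++ [k]) a b := by
  have hcount (v : Fin n) : (l ++ [k]).count v = l.count v + if k = v then 1 else 0 := by
    simp [List.count_singleton']
  unfold mutExt
  simp only [hB, Sum.inl.injEq]
  by_cases ha : a = k <;> by_cases hb : b = k
  · simp [ha, hb, signedAnMat, AnMat]
  · rw [if_pos (Or.inl ha)]
    simp only [signedAnMat, hcount, ha, if_pos, if_neg (Ne.symm hb), add_zero]
    ring
  · rw [if_pos (Or.inr hb)]
    simp only [signedAnMat, hcount, hb, if_pos, if_neg (Ne.symm ha), add_zero]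
    ring
  · rw [if_neg (by tauto), abs_mul_add_mul_abs_eq_zero (signedAnMat_mul_nonpos hk a b)]
    simp [signedAnMat, hcount, Ne.symm ha, Ne.symm hb]

theorem mutExtSeq_framedMat_AnMat {n : ℕ} (l : List (Fin n))
    (hl : ∀ l₁ k l₂, l = l₁ ++ k :: l₂ → ∀ a b : Fin n,
      a.val = k.val + 1 → b.val + 1 = k.val → Odd (l₁.count a + l₁.count b))
    (a b : Fin n) : mutExtSeq (framedMat (AnMat n)) l (.inl a) b = signedAnMat l a b := by
  induction l using List.reverseRecOn generalizing a b with
  | nil => simp [mutExtSeq, framedMat, signedAnMat]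
  | append_singleton l k ih =>
    simp only [mutExtSeq, List.foldl_append, List.foldl_cons, List.foldl_nil] at ih ⊢
    exact mutExt_signedAnMat (ih fun l₁ k' l₂ h => hl l₁ k' (l₂ ++ [k]) (by simp [h]))
      (hl l k [] rfl) a b

theorem signedAnMat_eq_of_count {n : ℕ} {l : List (Fin n)} {k : Fin n} {m : ℕ}
    (hk : l.count k = m) (hk_succ : ∀ v : Fin n, v.val = k.val + 1 → l.count v = m)
    (hk_pred : ∀ v : Fin n, v.val + 1 = k.val → l.count v = m + 1) (j : Fin n) :
    signedAnMat l j k = if j.val = k.val + 1 ∨ k.val = j.val + 1 then 1 else 0 := by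
  unfold signedAnMat AnMat
  by_cases h_succ : j.val = k.val + 1
  · simp [h_succ, hk_succ j h_succ, hk]
  · by_cases h_pred : j.val + 1 = k.val
    · simp [h_succ, h_pred, hk_pred j h_pred, hk]
    · simp [h_succ, h_pred, Ne.symm h_pred]

/-- Along any allowed shuffle mutation sequence on the framed linearly
oriented `A_n` quiver, at every step the mutation vertex `k_i` receives,
within the mutable part, exactly a simple arrow from `k_i - 1` (if it exists)
and a simple arrow from `k_i + 1` (if it exists) and no other incoming
arrows; in particular `k_i` is a sink of the mutable part. -/
theorem an_shuffle_incoming_arrows (n : ℕ) (ks : List (Fin n))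
    (h : IsShuffleSystem (List.finRange n) ks) (i : Fin ks.length) :
    (∀ j : Fin n,
      mutExtSeq (framedMat (AnMat n)) (ks.take i.val) (Sum.inl j) (ks.get i) =
        if j.val = (ks.get i).val + 1 ∨ (ks.get i).val = j.val + 1 then 1 else 0) ∧
    (∀ j : Fin n,
      mutExtSeq (framedMat (AnMat n)) (ks.take i.val) (Sum.inl (ks.get i)) j ≤ 0) := by
  set k := ks.get i
  have hks : ks = ks.take i ++ k :: ks.drop (i + 1) := by simp [k]
  have hsigned := mutExtSeq_framedMat_AnMat (ks.take i) fun l₁ k' l₂ hprefix _ _ =>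
    h.odd_count_add (l₂ := l₂ ++ ks.drop i) <| by
      conv_lhs => rw [← List.take_append_drop i ks, hprefix]
      simp
  obtain ⟨m, hk, hk_succ, hk_pred⟩ := h.count_prefix hks
  have hincoming := signedAnMat_eq_of_count hk hk_succ hk_pred
  refine ⟨fun j => by rw [hsigned, hincoming], fun j => ?_⟩
  rw [hsigned, signedAnMat_antisymm, hincoming]
  split_ifs <;> norm_num
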